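/- Let μ_λ ≤ 0 ≤ μ_x be real numbers, let γ > 0, and let λ₁, …, λ_m be finitely many real constants with μ_λ ≤ λᵢ ≤ 0 for all i. Define f(x) = max over i of 1/√(1 + γ(x + λᵢ)²). Then f is Lipschitz continuous on the interval [0, μ_x] with Lipschitz constant L_f satisfying: L_f ≤ (2/(3√3))·√γ if γ ≥ 1/(2·max{μ_λ², μ_x²}), and L_f ≤ γ·max{−μ_λ, μ_x}·(1 + γ·max{μ_λ², μ_x²})^{−3/2} otherwise; in either case L_f ≤ (2/(3√3))·√γ. -/

import Mathlib

open Matrix Filter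
open scoped Classical

/-- Euclidean norm of a vector. -/
noncomputable def euclNorm {n : Type*} [Fintype n] (v : n → ℝ) : ℝ :=
  Real.sqrt (∑ i, v i ^ 2)

/-- Spectral norm (largest singular value) of a matrix: the supremum of
`‖M x‖₂` over the Euclidean unit ball. -/
noncomputable def specNorm {m n : Type*} [Fintype m] [Fintype n] (M : Matrix m n ℝ) : ℝ :=
  sSup {y | ∃ x : n → ℝ, euclNorm x ≤ 1 ∧ y = euclNorm (M.mulVec x)}

/-- `A^{-1/2}`: the inverse of the positive semidefinite square root of `A`
(junk value `0` if `A` is not positive semidefinite). -/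
noncomputable def invSqrt {n : Type*} [Fintype n] [DecidableEq n]
    (A : Matrix n n ℝ) : Matrix n n ℝ :=
  if h : A.PosSemidef then
    ((h.1.eigenvectorUnitary : Matrix n n ℝ) *
      diagonal ((↑) ∘ Real.sqrt ∘ h.1.eigenvalues) *
      (star h.1.eigenvectorUnitary : Matrix n n ℝ))⁻¹ else 0

/-- Squared Frobenius norm helper via entries, and Frobenius norm. -/
noncomputable def frobNorm {m n : Type*} [Fintype m] [Fintype n] (M : Matrix m n ℝ) : ℝ :=
  Real.sqrt (∑ i, ∑ j, M i j ^ 2)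

/-- Frobenius (trace) inner product. -/
noncomputable def frobInner {m n : Type*} [Fintype m] [Fintype n]
    (A B : Matrix m n ℝ) : ℝ :=
  ∑ i, ∑ j, A i j * B i j

/-!
The derivative of `x ↦ 1/√(1 + γ(x + λ)²)` has absolute value `γ|t|/(1 + γt²)^{3/2}` at
`t = x + λ ∈ [μ_λ, μ_x]`, and a maximum of finitely many `L`-Lipschitz functions is `L`-Lipschitz.
The square of this derivative bound is `γ · s/(1 + s)³` with `s = γt²`, and `s/(1 + s)³` increases
on `[0, 1/2]` up to its maximum `4/27` at `s = 1/2`. This gives `2/(3√3) · √γ` in general and,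
when `γ max(μ_λ², μ_x²) < 1/2`, the derivative bound at `t = max(-μ_λ, μ_x)`.
-/

open Set

theorem abs_ciSup_sub_ciSup_le {ι : Type*} [Finite ι] [Nonempty ι] {a b : ι → ℝ} {c : ℝ}
    (h : ∀ i, |a i - b i| ≤ c) : |(⨆ i, a i) - ⨆ i, b i| ≤ c := by
  have sub_le (u v : ι → ℝ) (huv : ∀ i, u i - v i ≤ c) : (⨆ i, u i) - ⨆ i, v i ≤ c := by
    rw [sub_le_iff_le_add]
    exact ciSup_le fun i => (sub_le_iff_le_add.1 (huv i)).trans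
      (by gcongr; exact le_ciSup (finite_range v).bddAbove i)
  rw [abs_sub_le_iff]
  exact ⟨sub_le a b fun i => (abs_sub_le_iff.1 (h i)).1,
    sub_le b a fun i => (abs_sub_le_iff.1 (h i)).2⟩

theorem div_one_add_pow_three_le {s : ℝ} (hs : 0 ≤ s) : s / (1 + s) ^ 3 ≤ 4 / 27 := by
  rw [div_le_div_iff₀ (by positivity) (by norm_num), ← sub_nonneg]
  calc (0 : ℝ) ≤ (2 * s - 1) ^ 2 * (s + 4) := mul_nonneg (sq_nonneg _) (by linarith)
    _ = 4 * (1 + s) ^ 3 - s * 27 := by ring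

theorem div_one_add_pow_three_le_of_le {s S : ℝ} (hs : 0 ≤ s) (hsS : s ≤ S) (hS : S ≤ 1 / 2) :
    s / (1 + s) ^ 3 ≤ S / (1 + S) ^ 3 := by
  have hS0 : 0 ≤ S := hs.trans hsS
  rw [div_le_div_iff₀ (by positivity) (by positivity), ← sub_nonneg]
  have hsS' : s * S * (3 + s + S) ≤ 1 := by
    have : s * S ≤ 1 / 4 := by nlinarith
    nlinarith
  calc (0 : ℝ) ≤ (S - s) * (1 - s * S * (3 + s + S)) :=
        mul_nonneg (sub_nonneg.2 hsS) (sub_nonneg.2 hsS')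
    _ = S * (1 + s) ^ 3 - s * (1 + S) ^ 3 := by ring

/-- The absolute value of the derivative of `t ↦ 1 / √(1 + γ t²)`. -/
noncomputable def derivAbs (γ t : ℝ) : ℝ :=
  γ * |t| / ((1 + γ * t ^ 2) * √(1 + γ * t ^ 2))

section derivAbs

variable {γ : ℝ} (hγ : 0 ≤ γ)
include hγ

theorem hasDerivAt_one_div_sqrt_one_add_mul_sq (t : ℝ) :
    HasDerivAt (fun t => 1 / √(1 + γ * t ^ 2))
      (-(γ * t) / ((1 + γ * t ^ 2) * √(1 + γ * t ^ 2))) t := by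
  have hu : 0 < 1 + γ * t ^ 2 := by positivity
  have hu' : HasDerivAt (fun t => 1 + γ * t ^ 2) (γ * (2 * t)) t := by
    simpa using ((hasDerivAt_pow 2 t).const_mul γ).const_add 1
  simp only [one_div]
  refine ((hu'.sqrt hu.ne').inv (Real.sqrt_pos.2 hu).ne').congr_deriv ?_
  rw [Real.sq_sqrt hu.le]
  field_simp

theorem derivAbs_nonneg (t : ℝ) : 0 ≤ derivAbs γ t := by
  unfold derivAbs
  positivity

theorem derivAbs_sq (t : ℝ) : derivAbs γ t ^ 2 = γ * (γ * t ^ 2 / (1 + γ * t ^ 2) ^ 3) := by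
  have hu : 0 < 1 + γ * t ^ 2 := by positivity
  rw [derivAbs, div_pow, mul_pow, mul_pow, Real.sq_sqrt hu.le, sq_abs]
  ring

theorem derivAbs_le (t : ℝ) : derivAbs γ t ≤ 2 / (3 * √3) * √γ := by
  refine (pow_le_pow_iff_left₀ (derivAbs_nonneg hγ t) (by positivity) two_ne_zero).1 ?_
  rw [derivAbs_sq hγ, mul_pow, div_pow, mul_pow, Real.sq_sqrt (by norm_num), Real.sq_sqrt hγ]
  calc γ * (γ * t ^ 2 / (1 + γ * t ^ 2) ^ 3) ≤ γ * (4 / 27) :=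
        mul_le_mul_of_nonneg_left (div_one_add_pow_three_le (by positivity)) hγ
    _ = 2 ^ 2 / (3 ^ 2 * 3) * γ := by ring

theorem derivAbs_le_derivAbs {t M : ℝ} (htM : |t| ≤ M) (hM : γ * M ^ 2 ≤ 1 / 2) :
    derivAbs γ t ≤ derivAbs γ M := by
  refine (pow_le_pow_iff_left₀ (derivAbs_nonneg hγ t) (derivAbs_nonneg hγ M) two_ne_zero).1 ?_
  have htM' : t ^ 2 ≤ M ^ 2 := sq_le_sq' (abs_le.1 htM).1 (abs_le.1 htM).2
  rw [derivAbs_sq hγ, derivAbs_sq hγ]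
  exact mul_le_mul_of_nonneg_left (div_one_add_pow_three_le_of_le (by positivity)
    (mul_le_mul_of_nonneg_left htM' hγ) hM) hγ

theorem derivAbs_eq_rpow {t : ℝ} (ht : 0 ≤ t) :
    derivAbs γ t = γ * t * (1 + γ * t ^ 2) ^ (-(3 / 2) : ℝ) := by
  have hu : 0 < 1 + γ * t ^ 2 := by positivity
  rw [derivAbs, abs_of_nonneg ht, Real.rpow_neg hu.le, show (3 / 2 : ℝ) = 1 + 1 / 2 by norm_num,
    Real.rpow_add hu, Real.rpow_one, ← Real.sqrt_eq_rpow, div_eq_mul_inv]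

theorem abs_one_div_sqrt_add_sub_le {s : Set ℝ} (hs : Convex ℝ s) {lam L : ℝ}
    (hL : ∀ x ∈ s, derivAbs γ (x + lam) ≤ L) {x x' : ℝ} (hx : x ∈ s) (hx' : x' ∈ s) :
    |1 / √(1 + γ * (x + lam) ^ 2) - 1 / √(1 + γ * (x' + lam) ^ 2)| ≤ L * |x - x'| := by
  have hderiv (y : ℝ) := (hasDerivAt_one_div_sqrt_one_add_mul_sq hγ (y + lam)).comp_add_const y lam
  have hnorm (y : ℝ) : ‖-(γ * (y + lam)) / ((1 + γ * (y + lam) ^ 2) * √(1 + γ * (y + lam) ^ 2))‖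
      = derivAbs γ (y + lam) := by
    have hu : 0 < 1 + γ * (y + lam) ^ 2 := by positivity
    simp only [derivAbs, norm_div, norm_neg, norm_mul, Real.norm_eq_abs, abs_of_nonneg hγ,
      abs_of_pos hu, abs_of_nonneg (Real.sqrt_nonneg _)]
  simpa only [Real.norm_eq_abs] using hs.norm_image_sub_le_of_norm_hasDerivWithin_le
    (fun y _ => (hderiv y).hasDerivWithinAt) (fun y hy => (hnorm y).trans_le (hL y hy)) hx' hx

theorem abs_iSup_one_div_sqrt_add_sub_le {ι : Type*} [Finite ι] [Nonempty ι] {s : Set ℝ}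
    (hs : Convex ℝ s) {lam : ι → ℝ} {L : ℝ} (hL : ∀ i, ∀ x ∈ s, derivAbs γ (x + lam i) ≤ L)
    {x x' : ℝ} (hx : x ∈ s) (hx' : x' ∈ s) :
    |(⨆ i, 1 / √(1 + γ * (x + lam i) ^ 2)) - ⨆ i, 1 / √(1 + γ * (x' + lam i) ^ 2)|
      ≤ L * |x - x'| :=
  abs_ciSup_sub_ciSup_le fun i => abs_one_div_sqrt_add_sub_le hγ hs (hL i) hx hx'

end derivAbs

/-- Lipschitz bound for `f(x) = maxᵢ 1/√(1 + γ(x + λᵢ)²)` on `[0, μx]`. -/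
theorem stmt1 {m : ℕ} (hm : 0 < m) (μl μx γ : ℝ) (hμl : μl ≤ 0) (hμx : 0 ≤ μx)
    (hγ : 0 < γ) (lam : Fin m → ℝ) (hlam : ∀ i, μl ≤ lam i ∧ lam i ≤ 0)
    (f : ℝ → ℝ) (hf : ∀ x, f x = ⨆ i, 1 / Real.sqrt (1 + γ * (x + lam i) ^ 2)) :
    (∀ x ∈ Set.Icc (0 : ℝ) μx, ∀ x' ∈ Set.Icc (0 : ℝ) μx,
      |f x - f x'| ≤
        (if 1 / (2 * max (μl ^ 2) (μx ^ 2)) ≤ γ then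
            2 / (3 * Real.sqrt 3) * Real.sqrt γ
          else
            γ * max (-μl) μx * (1 + γ * max (μl ^ 2) (μx ^ 2)) ^ (-(3/2) : ℝ))
        * |x - x'|) ∧
    (∀ x ∈ Set.Icc (0 : ℝ) μx, ∀ x' ∈ Set.Icc (0 : ℝ) μx,
      |f x - f x'| ≤ 2 / (3 * Real.sqrt 3) * Real.sqrt γ * |x - x'|) := by
  have : Nonempty (Fin m) := ⟨⟨0, hm⟩⟩
  have lipschitz (L : ℝ) (hL : ∀ t ∈ Icc μl μx, derivAbs γ t ≤ L) :
      ∀ x ∈ Icc (0 : ℝ) μx, ∀ x' ∈ Icc (0 : ℝ) μx, |f x - f x'| ≤ L * |x - x'| := by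
    intro x hx x' hx'
    rw [hf, hf]
    refine abs_iSup_one_div_sqrt_add_sub_le hγ.le (convex_Icc 0 μx) (fun i y hy => hL _ ?_) hx hx'
    exact ⟨by linarith [(hlam i).1, hy.1], by linarith [(hlam i).2, hy.2]⟩
  have global := lipschitz _ fun t _ => derivAbs_le hγ.le t
  refine ⟨?_, global⟩
  split_ifs with hγ_large
  · exact global
  have hMsq : max (μl ^ 2) (μx ^ 2) = max (-μl) μx ^ 2 := by
    rcases le_total (-μl) μx with h | h
    · rw [max_eq_right h, max_eq_right (by nlinarith)]
    · rw [max_eq_left h, max_eq_left (by nlinarith), neg_sq]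
  rw [hMsq] at hγ_large ⊢
  set M := max (-μl) μx
  have hM : 0 ≤ M := hμx.trans (le_max_right _ _)
  have hγM : γ * M ^ 2 ≤ 1 / 2 := by
    rcases (sq_nonneg M).eq_or_lt with hM2 | hM2
    · rw [← hM2]
      norm_num
    · rw [not_le, lt_div_iff₀ (by positivity)] at hγ_large
      linarith
  rw [← derivAbs_eq_rpow hγ.le hM]
  exact lipschitz _ fun t ht => derivAbs_le_derivAbs hγ.le
    (abs_le.2 ⟨by linarith [ht.1, le_max_left (-μl) μx], ht.2.trans (le_max_right _ _)⟩) hγM
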